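/- For every integer r ≥ 2, ∑_{ℓ=2}^{r} (−1)^ℓ ℓ² (H_ℓ − 1) / ((r+ℓ)! (r−ℓ)!) = 1 / (4(r−1)(2r−1) ((r−1)!)²), where H_ℓ = 1 + 1/2 + … + 1/ℓ is the ℓ-th harmonic number. -/

import Mathlib

/-!
The sum telescopes: `antidiff r (m + 1) - antidiff r m` is the `(m + 1)`-st summand, a
rational-function identity in `r`, `m` and `H_m` once `H_{m+1} = H_m + 1/(m + 1)` is substituted.
The factor `r - m` makes `antidiff r r = 0`, and `antidiff r 1` (where `H_1 = 1`) is minus the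
right-hand side.
-/

namespace PaperStmt
open Finset Nat

def summand (r ℓ : ℕ) : ℚ :=
  (-1 : ℚ) ^ ℓ * (ℓ : ℚ) ^ 2 * (harmonic ℓ - 1)
    / ((Nat.factorial (r + ℓ) : ℚ) * (Nat.factorial (r - ℓ) : ℚ))

def antidiff (r m : ℕ) : ℚ :=
  (-1) ^ m * ((r : ℚ) - m) / ((r + m)! * (r - m)!) *
    ((harmonic m - 1) * m * (m + 1) / (2 * (r - 1)) +
      ((2 * r - 1) * m - (r - 1)) * (r + m) / (4 * (r - 1) ^ 2 * (2 * r - 1)))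

theorem antidiff_succ_sub_antidiff {r m : ℕ} (hr : 2 ≤ r) (hm : m < r) :
    antidiff r (m + 1) - antidiff r m = summand r (m + 1) := by
  have hr' : (2 : ℚ) ≤ r := by exact_mod_cast hr
  have hmr : (m : ℚ) + 1 ≤ r := by exact_mod_cast hm
  have hfac_add : ((r + (m + 1))! : ℚ) = (r + m + 1) * (r + m)! := by
    rw [← add_assoc, Nat.factorial_succ]; push_cast; ring
  have hfac_sub : ((r - m)! : ℚ) = (r - m) * (r - (m + 1))! := by
    rw [show r - m = r - (m + 1) + 1 by omega, Nat.factorial_succ, Nat.cast_mul,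
      show r - (m + 1) + 1 = r - m by omega, Nat.cast_sub hm.le]
  have hr1 : (r : ℚ) - 1 ≠ 0 := by linarith
  have hr2 : (r : ℚ) * 2 - 1 ≠ 0 := by linarith
  have hrm : (r : ℚ) - m ≠ 0 := by linarith
  unfold antidiff summand
  rw [harmonic_succ, hfac_add, hfac_sub]
  push_cast
  field_simp
  ring

theorem antidiff_self (r : ℕ) : antidiff r r = 0 := by
  simp [antidiff]

theorem antidiff_one {r : ℕ} (hr : 2 ≤ r) :
    antidiff r 1 = -1 / (4 * ((r : ℚ) - 1) * (2 * r - 1) * ((r - 1)! : ℚ) ^ 2) := by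
  obtain ⟨n, rfl⟩ : ∃ n, r = n + 1 := ⟨r - 1, by omega⟩
  have hn : (n : ℚ) ≠ 0 := by exact_mod_cast (by omega : n ≠ 0)
  have hfac : ((n + 1 + 1)! : ℚ) = (n + 2) * (n + 1) * n ! := by
    rw [Nat.factorial_succ, Nat.factorial_succ]; push_cast; ring
  simp only [antidiff, harmonic_succ, harmonic_zero, Nat.add_sub_cancel, hfac]
  push_cast [add_sub_cancel_right]
  field_simp
  ring

theorem sum_Icc_summand {r n : ℕ} (hr : 2 ≤ r) (hn : 1 ≤ n) (hnr : n ≤ r) :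
    ∑ ℓ ∈ Icc 2 n, summand r ℓ = antidiff r n - antidiff r 1 := by
  rw [← sum_Ico_sub _ hn, ← Ico_add_one_right_eq_Icc, ← sum_Ico_add' _ 1 n 1]
  exact sum_congr rfl fun m hm => (antidiff_succ_sub_antidiff hr (by simp at hm; omega)).symm

/-- For `r ≥ 2`,
`∑_{ℓ=2}^{r} (-1)^ℓ ℓ² (H_ℓ - 1) / ((r+ℓ)!(r-ℓ)!) = 1/(4(r-1)(2r-1)((r-1)!)²)`,
where `H_ℓ` is the `ℓ`-th harmonic number. -/
theorem stmt11 (r : ℕ) (hr : 2 ≤ r) :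
    ∑ ℓ ∈ Finset.Icc 2 r,
        (-1 : ℚ) ^ ℓ * (ℓ : ℚ) ^ 2 * (harmonic ℓ - 1)
          / ((Nat.factorial (r + ℓ) : ℚ) * (Nat.factorial (r - ℓ) : ℚ))
      = 1 / (4 * ((r : ℚ) - 1) * (2 * (r : ℚ) - 1) * ((Nat.factorial (r - 1) : ℚ)) ^ 2) := by
  change ∑ ℓ ∈ Icc 2 r, summand r ℓ = _
  rw [sum_Icc_summand hr (by omega) le_rfl,
    antidiff_self, antidiff_one hr, zero_sub, ← neg_div, neg_neg]

end PaperStmt
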